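/- arXiv:2306.06655 — 2 statements merged into one kernel-verified Lean document; each statement's English description precedes it below -/
import Mathlib

section
/- Every signed graph Ġ contains a balanced spanning subgraph Ḣ (on the same vertex set) satisfying λ₁(Ġ) ≤ λ₁(Ḣ). -/
open Matrix

/-- The signed adjacency matrix of a signed graph `(G, σ)`. -/
def signedAdj {V : Type*} (G : SimpleGraph V) [DecidableRel G.Adj]
    (σ : V → V → ℝ) : Matrix V V ℝ :=
  fun u v => if G.Adj u v then σ u v else 0

/-- The product of the edge signs along a walk in a signed graph. -/
def walkSign {V : Type*} {G : SimpleGraph V} (σ : V → V → ℝ) {u v : V} (w : G.Walk u v) : ℝ :=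
  (w.darts.map fun d => σ d.toProd.1 d.toProd.2).prod

/-- A signed graph is balanced if every cycle has edge-sign product `1`. -/
def IsBalanced {V : Type*} (G : SimpleGraph V) (σ : V → V → ℝ) : Prop :=
  ∀ (v : V) (w : G.Walk v v), w.IsCycle → walkSign σ w = 1

/-!
Let `x` be a unit eigenvector for `λ₁(Ġ)` and switch `σ` by the sign vector `ε` of `x`. Keep
the edges of `G` that become positive: the resulting spanning subgraph `Ḣ` is switching
equivalent to an all-positive graph, hence balanced. Every deleted edge `uv` has
`σ(uv) = -ε(u)ε(v)`, so it contributes `-|x u| |x v| ≤ 0` to the quadratic form, and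
`λ₁(Ġ) = xᵀ A(Ġ) x ≤ xᵀ A(Ḣ) x ≤ λ₁(Ḣ)` by the Rayleigh principle.
-/

namespace Matrix.IsHermitian
variable {n : Type*} [Fintype n] [DecidableEq n] {A : Matrix n n ℝ}

theorem dotProduct_mulVec_le_sSup_spectrum (hA : A.IsHermitian) (x : n → ℝ) :
    x ⬝ᵥ A *ᵥ x ≤ sSup (spectrum ℝ A) * (x ⬝ᵥ x) := by
  set U : Matrix n n ℝ := ↑hA.eigenvectorUnitary
  set D := diagonal hA.eigenvalues
  have hstar : star U *ᵥ x = x ᵥ* U := by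
    rw [star_eq_conjTranspose, conjTranspose_eq_transpose_of_trivial, mulVec_transpose]
  have hA' : A = U * D * star U := by
    conv_lhs => rw [hA.spectral_theorem, Unitary.conjStarAlgAut_apply]
    rfl
  have hquad : x ⬝ᵥ A *ᵥ x = (x ᵥ* U) ⬝ᵥ D *ᵥ (x ᵥ* U) := by
    rw [hA', ← mulVec_mulVec, ← mulVec_mulVec, dotProduct_mulVec, hstar]
  have hnorm : x ⬝ᵥ x = (x ᵥ* U) ⬝ᵥ (x ᵥ* U) := by
    rw [← dotProduct_mulVec, ← hstar, mulVec_mulVec,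
      Unitary.mul_star_self_of_mem hA.eigenvectorUnitary.2, one_mulVec]
  have hle : ∀ i, hA.eigenvalues i ≤ sSup (spectrum ℝ A) := fun i =>
    le_csSup A.finite_real_spectrum.bddAbove (hA.eigenvalues_mem_spectrum_real i)
  rw [hquad, hnorm, dotProduct, dotProduct, Finset.mul_sum]
  refine Finset.sum_le_sum fun i _ => ?_
  rw [mulVec_diagonal, mul_left_comm]
  exact mul_le_mul_of_nonneg_right (hle i) (mul_self_nonneg _)

theorem exists_dotProduct_mulVec_eq_sSup_spectrum [Nonempty n] (hA : A.IsHermitian) :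
    ∃ x : n → ℝ, x ⬝ᵥ x = 1 ∧ x ⬝ᵥ A *ᵥ x = sSup (spectrum ℝ A) := by
  obtain ⟨i, hi⟩ : sSup (spectrum ℝ A) ∈ Set.range hA.eigenvalues := by
    rw [← hA.spectrum_real_eq_range_eigenvalues]
    exact Set.Nonempty.csSup_mem ⟨_, hA.eigenvalues_mem_spectrum_real (Classical.arbitrary n)⟩
      A.finite_real_spectrum
  refine ⟨hA.eigenvectorBasis i, ?_, ?_⟩
  · have := real_inner_self_eq_norm_sq (hA.eigenvectorBasis i)
    rw [hA.eigenvectorBasis.orthonormal.1 i, EuclideanSpace.inner_eq_star_dotProduct] at this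
    simpa using this
  · simpa [hi] using (hA.eigenvalues_eq i).symm

end Matrix.IsHermitian

section SignedGraph

variable {V : Type*} {σ : V → V → ℝ}

lemma signedAdj_isHermitian (G : SimpleGraph V) [DecidableRel G.Adj]
    (hσ : ∀ u v, σ u v = σ v u) : (signedAdj G σ).IsHermitian := by
  ext u v
  simp only [conjTranspose_apply, signedAdj, star_trivial, G.adj_comm v u, hσ v u]

lemma walkSign_eq_mul_of_adj {G : SimpleGraph V} {ε : V → ℝ} (hε : ∀ v, ε v * ε v = 1)
    (hσ : ∀ u v, G.Adj u v → σ u v = ε u * ε v) {u v : V} (w : G.Walk u v) :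
    walkSign σ w = ε u * ε v := by
  induction w with
  | nil => simp [walkSign, hε]
  | @cons a b c hab p ih =>
    have hcons : walkSign σ (.cons hab p) = σ a b * walkSign σ p := by
      simp [walkSign, SimpleGraph.Walk.darts_cons]
    rw [hcons, ih, hσ a b hab]
    linear_combination ε a * ε c * hε b

lemma isBalanced_of_adj_eq_mul {G : SimpleGraph V} {ε : V → ℝ} (hε : ∀ v, ε v * ε v = 1)
    (hσ : ∀ u v, G.Adj u v → σ u v = ε u * ε v) : IsBalanced G σ :=
  fun v w _ => (walkSign_eq_mul_of_adj hε hσ w).trans (hε v)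

/-- The spanning subgraph of the edges of `G` that are positive after switching `σ` by `ε`. -/
def switchingPositiveSubgraph (G : SimpleGraph V) (hσ : ∀ u v, σ u v = σ v u) (ε : V → ℝ) :
    SimpleGraph V where
  Adj u v := G.Adj u v ∧ σ u v = ε u * ε v
  symm := ⟨fun u v h => ⟨h.1.symm, by rw [hσ, h.2, mul_comm]⟩⟩
  loopless := ⟨fun v h => G.loopless.irrefl v h.1⟩

lemma switchingPositiveSubgraph_le (G : SimpleGraph V) (hσ : ∀ u v, σ u v = σ v u)
    (ε : V → ℝ) : switchingPositiveSubgraph G hσ ε ≤ G :=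
  fun _ _ h => h.1

lemma isBalanced_switchingPositiveSubgraph (G : SimpleGraph V) (hσ : ∀ u v, σ u v = σ v u)
    {ε : V → ℝ} (hε : ∀ v, ε v * ε v = 1) : IsBalanced (switchingPositiveSubgraph G hσ ε) σ :=
  isBalanced_of_adj_eq_mul hε fun _ _ h => h.2

lemma dotProduct_signedAdj_mulVec_le [Fintype V] {G H : SimpleGraph V} [DecidableRel G.Adj]
    [DecidableRel H.Adj] (hHG : H ≤ G) {x : V → ℝ}
    (hdel : ∀ u v, G.Adj u v → ¬H.Adj u v → σ u v * (x u * x v) ≤ 0) :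
    x ⬝ᵥ signedAdj G σ *ᵥ x ≤ x ⬝ᵥ signedAdj H σ *ᵥ x := by
  simp only [dotProduct, mulVec, Finset.mul_sum]
  refine Finset.sum_le_sum fun u _ => Finset.sum_le_sum fun v _ => ?_
  by_cases hH : H.Adj u v
  · simp [signedAdj, hH, hHG hH]
  by_cases hG : G.Adj u v
  · simpa [signedAdj, hH, hG, mul_left_comm (x u)] using hdel u v hG hH
  · simp [signedAdj, hH, hG]

noncomputable def signVector (x : V → ℝ) (v : V) : ℝ := if x v < 0 then -1 else 1

lemma signVector_mul_self (x : V → ℝ) (v : V) : signVector x v * signVector x v = 1 := by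
  unfold signVector; split_ifs <;> norm_num

lemma signVector_mul_nonneg (x : V → ℝ) (v : V) : 0 ≤ signVector x v * x v := by
  unfold signVector; split_ifs <;> linarith

lemma mul_mul_nonpos_of_not_adj_switchingPositiveSubgraph {G : SimpleGraph V}
    (hσ : ∀ u v, σ u v = σ v u)
    (hsign : ∀ u v, G.Adj u v → σ u v = 1 ∨ σ u v = -1) (x : V → ℝ) {u v : V} (hG : G.Adj u v)
    (hH : ¬(switchingPositiveSubgraph G hσ (signVector x)).Adj u v) :
    σ u v * (x u * x v) ≤ 0 := by
  set ε := signVector x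
  have hsq : σ u v * σ u v = (ε u * ε v) * (ε u * ε v) := by
    rw [mul_mul_mul_comm, signVector_mul_self, signVector_mul_self]
    rcases hsign u v hG with h | h <;> norm_num [h]
  have hneg : σ u v = -(ε u * ε v) := (mul_self_eq_mul_self_iff.mp hsq).resolve_left (hH ⟨hG, ·⟩)
  rw [hneg]
  linarith [mul_nonneg (signVector_mul_nonneg x u) (signVector_mul_nonneg x v)]

end SignedGraph

/-- Every signed graph `(G, σ)` contains a balanced spanning subgraph `(H, σ)` with
`λ₁(Ġ) ≤ λ₁(Ḣ)`. -/
theorem exists_balanced_spanning_subgraph_index_ge {V : Type*} [Fintype V] [DecidableEq V]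
    (G : SimpleGraph V) [DecidableRel G.Adj] (σ : V → V → ℝ)
    (hσsymm : ∀ u v, σ u v = σ v u)
    (hσsign : ∀ u v, G.Adj u v → σ u v = 1 ∨ σ u v = -1) :
    ∃ (H : SimpleGraph V) (_ : DecidableRel H.Adj), H ≤ G ∧ IsBalanced H σ ∧
      sSup (spectrum ℝ (signedAdj G σ)) ≤ sSup (spectrum ℝ (signedAdj H σ)) := by
  rcases isEmpty_or_nonempty V with hV | hV
  · exact ⟨G, inferInstance, le_rfl, fun v => isEmptyElim v, le_rfl⟩
  obtain ⟨x, hx_norm, hx_top⟩ :=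
    (signedAdj_isHermitian G hσsymm).exists_dotProduct_mulVec_eq_sSup_spectrum
  let H := switchingPositiveSubgraph G hσsymm (signVector x)
  let _ : DecidableRel H.Adj := Classical.decRel _
  refine ⟨H, inferInstance, switchingPositiveSubgraph_le G hσsymm _,
    isBalanced_switchingPositiveSubgraph G hσsymm (signVector_mul_self x), ?_⟩
  calc sSup (spectrum ℝ (signedAdj G σ))
      = x ⬝ᵥ signedAdj G σ *ᵥ x := hx_top.symm
    _ ≤ x ⬝ᵥ signedAdj H σ *ᵥ x := dotProduct_signedAdj_mulVec_le
        (switchingPositiveSubgraph_le G hσsymm _) fun _ _ hG hH =>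
          mul_mul_nonpos_of_not_adj_switchingPositiveSubgraph hσsymm hσsign x hG hH
    _ ≤ sSup (spectrum ℝ (signedAdj H σ)) * (x ⬝ᵥ x) :=
        (signedAdj_isHermitian H hσsymm).dotProduct_mulVec_le_sSup_spectrum x
    _ = sSup (spectrum ℝ (signedAdj H σ)) := by rw [hx_norm, mul_one]
end

section
/- Let Ġ = (G,σ) be a 𝒦₄⁻-free unbalanced signed graph of order n ≥ 7. Then the number of edges satisfies e(Ġ) ≤ n(n-1)/2 - (n-3). -/
open Matrix

/-- A signed graph is unbalanced if some cycle has edge-sign product `-1`. -/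
def IsUnbalanced {V : Type*} (G : SimpleGraph V) (σ : V → V → ℝ) : Prop :=
  ∃ (v : V) (w : G.Walk v v), w.IsCycle ∧ walkSign σ w = -1

/-- A signed graph is `𝒦₄⁻`-free if every 4-clique induces a balanced signed `K₄`,
i.e. every triangle contained in a 4-clique has positive sign. -/
def K4MinusFree {V : Type*} (G : SimpleGraph V) (σ : V → V → ℝ) : Prop :=
  ∀ a b c d : V, G.Adj a b → G.Adj a c → G.Adj a d → G.Adj b c → G.Adj b d → G.Adj c d →
    σ a b * σ b c * σ c a = 1 ∧ σ a b * σ b d * σ d a = 1 ∧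
    σ a c * σ c d * σ d a = 1 ∧ σ b c * σ c d * σ d b = 1

/-!
Take a shortest negative cycle `C`, of length `k ≥ 3`. It has no chord, since a chord splits `C`
into two shorter cycles whose signs multiply to `sign C = -1`. No vertex `x` is adjacent to all of
`C`: for `k = 3` the triangle `C` would lie in a negative `K₄`, and for `k ≥ 4` the triangles
`x a b` over the edges `ab` of `C` have product `sign C = -1`, so one of them would be a shorter
negative cycle. Hence at least `k(k-1)/2 - k` pairs inside `C` are non-adjacent, and each of the
`n - k` vertices outside `C` misses some vertex of `C`, giving at least `n - 3` non-edges.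
-/

open Finset

lemma Nat.two_mul_le_choose_two_add_three {k : ℕ} (hk : 3 ≤ k) : 2 * k ≤ k.choose 2 + 3 := by
  induction k, hk using Nat.le_induction with
  | base => decide
  | succ k hk ih =>
    rw [Nat.choose_two_right, Nat.triangle_succ, ← Nat.choose_two_right]
    omega

namespace SimpleGraph

variable {V : Type*} {G : SimpleGraph V}

namespace Walk

lemma IsCycle.card_support_toFinset [DecidableEq V] {v : V} {w : G.Walk v v} (hw : w.IsCycle) :
    #w.support.toFinset = w.length := by
  have htail : w.support.toFinset = w.support.tail.toFinset := by
    rw [← w.cons_tail_support, List.toFinset_cons, List.tail_cons,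
      insert_eq_of_mem (List.mem_toFinset.2 (w.end_mem_tail_support hw.not_nil))]
  rw [htail, List.toFinset_card_of_nodup hw.support_nodup, List.length_tail, length_support]
  rfl

lemma isCycle_triangle {a b c : V} (hab : G.Adj a b) (hbc : G.Adj b c) (hca : G.Adj c a) :
    (cons hab (cons hbc (cons hca nil))).IsCycle := by
  simp [cons_isCycle_iff, hab.ne, hbc.ne, hca.ne, hab.ne', hca.ne']

lemma exists_eq_triangle_of_length_eq_three {v : V} (w : G.Walk v v) (h : w.length = 3) :
    ∃ (a b : V) (hva : G.Adj v a) (hab : G.Adj a b) (hbv : G.Adj b v),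
      w = cons hva (cons hab (cons hbv nil)) := by
  rcases w with _ | ⟨h1, _ | ⟨h2, _ | ⟨h3, _ | ⟨h4, p⟩⟩⟩⟩
  on_goal 4 => exact ⟨_, _, h1, h2, h3, rfl⟩
  all_goals simp at h

end Walk

lemma card_edgeFinset_add_card_edgeFinset_compl [Fintype V] [DecidableEq V] [DecidableRel G.Adj] :
    #G.edgeFinset + #Gᶜ.edgeFinset = (Fintype.card V).choose 2 := by
  rw [← card_union_of_disjoint (disjoint_edgeFinset.2 disjoint_compl_right),
    ← card_edgeFinset_top_eq_card_choose_two]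
  congr 1
  ext e
  induction e using Sym2.ind with
  | _ a b =>
    by_cases hab : G.Adj a b
    · simp [hab, hab.ne]
    · simp [hab]

lemma choose_two_add_card_compl_le_card_edgeFinset_compl_add [Fintype V] [DecidableEq V]
    [DecidableRel G.Adj] (S : Finset V) (E : Finset (Sym2 V))
    (hin : ∀ x ∈ S, ∀ y ∈ S, G.Adj x y → s(x, y) ∈ E)
    (hout : ∀ x ∉ S, ∃ y ∈ S, ¬ G.Adj x y) :
    (#S).choose 2 + #Sᶜ ≤ #Gᶜ.edgeFinset + #E := by
  choose! f hfS hfadj using hout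
  set A := S.offDiag.image Sym2.mk.uncurry
  set B := Sᶜ.image fun x => s(x, f x)
  have hA : #A = (#S).choose 2 := Sym2.card_image_offDiag S
  have hB : #B = #Sᶜ := by
    refine card_image_of_injOn fun x hx y hy hxy => ?_
    simp only [coe_compl, Set.mem_compl_iff, mem_coe] at hx hy
    rcases Sym2.eq_iff.1 hxy with ⟨h, -⟩ | ⟨h, -⟩
    · exact h
    · exact absurd (h ▸ hfS y hy) hx
  have hAB : Disjoint (A \ E) B := by
    rw [Finset.disjoint_left]
    simp only [mem_sdiff, mem_image, mem_offDiag, mem_compl, A, B]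
    rintro _ ⟨⟨⟨a, b⟩, ⟨ha, hb, -⟩, rfl⟩, -⟩ ⟨x, hx, hxe⟩
    rcases Sym2.eq_iff.1 hxe with ⟨rfl, -⟩ | ⟨rfl, -⟩ <;> contradiction
  have hsub : (A \ E) ∪ B ⊆ Gᶜ.edgeFinset := by
    simp only [subset_iff, mem_union, mem_sdiff, mem_image, mem_offDiag, mem_compl, A, B]
    rintro _ (⟨⟨⟨a, b⟩, ⟨ha, hb, hab⟩, rfl⟩, hE⟩ | ⟨x, hx, rfl⟩)
    · simpa [hab] using fun h => hE (hin a ha b hb h)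
    · simpa [hfadj x hx] using fun h : x = f x => hx (h ▸ hfS x hx)
  calc (#S).choose 2 + #Sᶜ ≤ #(A \ E) + #E + #B := by
        rw [← hA, ← hB]; gcongr; exact card_le_card_sdiff_add_card
    _ = #((A \ E) ∪ B) + #E := by rw [card_union_of_disjoint hAB]; ring
    _ ≤ #Gᶜ.edgeFinset + #E := by gcongr

end SimpleGraph

open SimpleGraph Walk

section SignedGraph

variable {V : Type*} {G : SimpleGraph V} (σ : V → V → ℝ)

@[simp]
lemma walkSign_nil {u : V} : walkSign σ (nil : G.Walk u u) = 1 := rfl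

@[simp]
lemma walkSign_cons {u v w : V} (h : G.Adj u v) (p : G.Walk v w) :
    walkSign σ (cons h p) = σ u v * walkSign σ p := by
  simp [walkSign]

@[simp]
lemma walkSign_append {u v w : V} (p : G.Walk u v) (q : G.Walk v w) :
    walkSign σ (p.append q) = walkSign σ p * walkSign σ q := by
  simp [walkSign, darts_append]

@[simp]
lemma walkSign_rotate [DecidableEq V] {u v : V} (c : G.Walk v v) (h : u ∈ c.support) :
    walkSign σ (c.rotate u h) = walkSign σ c := by
  rw [rotate, walkSign_append, mul_comm, ← walkSign_append, take_spec]

variable {σ}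

lemma walkSign_eq_one_or_neg_one (hσsign : ∀ u v, G.Adj u v → σ u v = 1 ∨ σ u v = -1)
    {u v : V} (p : G.Walk u v) : walkSign σ p = 1 ∨ walkSign σ p = -1 := by
  induction p with
  | nil => simp
  | cons h q ih =>
    rcases hσsign _ _ h with h1 | h1 <;> rcases ih with h2 | h2 <;> simp [h1, h2]

lemma walkSign_eq_of_forall_triangle_eq_one (hσsymm : ∀ u v, σ u v = σ v u)
    (hσsign : ∀ u v, G.Adj u v → σ u v = 1 ∨ σ u v = -1) {x u v : V} (p : G.Walk u v)
    (hadj : ∀ y ∈ p.support, G.Adj x y)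
    (htri : ∀ d ∈ p.darts, σ x d.fst * σ d.fst d.snd * σ d.snd x = 1) :
    walkSign σ p = σ x u * σ x v := by
  induction p with
  | nil =>
    rcases hσsign _ _ (hadj _ (start_mem_support _)) with h | h <;> simp [h]
  | @cons u m v h q ih =>
    have hsq (y : V) (hy : G.Adj x y) : σ x y * σ x y = 1 := by
      rcases hσsign _ _ hy with h | h <;> simp [h]
    have hxu := hsq u (hadj u (by simp))
    have hum := htri ⟨(u, m), h⟩ (by simp)
    rw [walkSign_cons, ih (fun y hy => hadj y (by simp [hy])) (fun d hd => htri d (by simp [hd]))]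
    simp only [hσsymm m x] at hum
    linear_combination σ x v * σ x u * hum - σ x v * σ u m * σ x m * hxu

def IsShortestNegCycle (σ : V → V → ℝ) {v : V} (w : G.Walk v v) : Prop :=
  w.IsCycle ∧ walkSign σ w = -1 ∧
    ∀ (u : V) (c : G.Walk u u), c.IsCycle → walkSign σ c = -1 → w.length ≤ c.length

lemma IsUnbalanced.exists_isShortestNegCycle (h : IsUnbalanced G σ) :
    ∃ (v : V) (w : G.Walk v v), IsShortestNegCycle σ w := by
  classical
  have hex : ∃ k, ∃ (v : V) (w : G.Walk v v), w.IsCycle ∧ walkSign σ w = -1 ∧ w.length = k :=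
    let ⟨v, w, hc, hs⟩ := h; ⟨_, v, w, hc, hs, rfl⟩
  obtain ⟨v, w, hc, hs, hlen⟩ := Nat.find_spec hex
  exact ⟨v, w, hc, hs, fun u c hc' hs' => hlen ▸ Nat.find_min' hex ⟨u, c, hc', hs', rfl⟩⟩

namespace IsShortestNegCycle

variable {v : V} {w : G.Walk v v}

lemma rotate [DecidableEq V] (hw : IsShortestNegCycle σ w) {x : V} (hx : x ∈ w.support) :
    IsShortestNegCycle σ (w.rotate x hx) :=
  ⟨hw.1.rotate hx, by rw [walkSign_rotate, hw.2.1], by simpa using hw.2.2⟩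

lemma mem_edges_of_adj_start [DecidableEq V] (hσsymm : ∀ u v, σ u v = σ v u)
    (hσsign : ∀ u v, G.Adj u v → σ u v = 1 ∨ σ u v = -1) (hw : IsShortestNegCycle σ w)
    {y : V} (hy : y ∈ w.support) (hvy : G.Adj v y) : s(v, y) ∈ w.edges := by
  by_contra hchord
  obtain ⟨hcyc, hneg, hmin⟩ := hw
  have hwpq := w.take_spec hy
  set p := w.takeUntil y hy
  set q := w.dropUntil y hy
  have hp : (cons hvy.symm p).IsCycle := by
    refine (cons_isCycle_iff _ _).2 ⟨hcyc.isPath_takeUntil hy, fun he => hchord ?_⟩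
    rw [← hwpq, edges_append, Sym2.eq_swap]
    exact List.mem_append_left _ he
  have hq : (cons hvy q).IsCycle := by
    refine (cons_isCycle_iff _ _).2 ⟨?_, fun he => hchord ?_⟩
    · exact IsCycle.isPath_of_append_right (not_nil_of_ne hvy.ne) (hwpq ▸ hcyc)
    · rw [← hwpq, edges_append]
      exact List.mem_append_right _ he
  have hsign : walkSign σ (cons hvy.symm p) * walkSign σ (cons hvy q) = -1 := by
    have hpq : walkSign σ p * walkSign σ q = -1 := by rw [← walkSign_append, hwpq, hneg]
    rw [walkSign_cons, walkSign_cons, hσsymm y v]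
    rcases hσsign v y hvy with h | h <;> rw [h] <;> linear_combination hpq
  have hlen : p.length + q.length = w.length := by rw [← length_append, hwpq]
  have hp3 := hp.three_le_length
  have hq3 := hq.three_le_length
  rw [length_cons] at hp3 hq3
  rcases walkSign_eq_one_or_neg_one hσsign (cons hvy.symm p) with h | h
  · have := hmin _ _ hq (by simpa [h] using hsign)
    rw [length_cons] at this
    omega
  · have := hmin _ _ hp h
    rw [length_cons] at this
    omega

lemma mem_edges_of_adj [DecidableEq V] (hσsymm : ∀ u v, σ u v = σ v u)
    (hσsign : ∀ u v, G.Adj u v → σ u v = 1 ∨ σ u v = -1) (hw : IsShortestNegCycle σ w)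
    {x y : V} (hx : x ∈ w.support) (hy : y ∈ w.support) (hxy : G.Adj x y) :
    s(x, y) ∈ w.edges :=
  (w.rotate_edges x hx).perm.mem_iff.1 <|
    (hw.rotate hx).mem_edges_of_adj_start hσsymm hσsign (by simpa using hy) hxy

lemma exists_not_adj (hσsymm : ∀ u v, σ u v = σ v u)
    (hσsign : ∀ u v, G.Adj u v → σ u v = 1 ∨ σ u v = -1) (hfree : K4MinusFree G σ)
    (hw : IsShortestNegCycle σ w) (x : V) :
    ∃ y ∈ w.support, ¬ G.Adj x y := by
  by_contra! hadj
  obtain ⟨hcyc, hneg, hmin⟩ := hw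
  rcases hcyc.three_le_length.eq_or_lt with h3 | h4
  · obtain ⟨a, b, hva, hab, hbv, rfl⟩ := exists_eq_triangle_of_length_eq_three w h3.symm
    have := (hfree v a b x hva hbv.symm (hadj v (by simp)).symm hab (hadj a (by simp)).symm
      (hadj b (by simp)).symm).1
    simp only [walkSign_cons, walkSign_nil, mul_one, ← mul_assoc, this] at hneg
    norm_num at hneg
  · have htri : ∀ d ∈ w.darts, σ x d.fst * σ d.fst d.snd * σ d.snd x = 1 := by
      intro d hd
      have ha := hadj _ (w.dart_fst_mem_support_of_mem_darts hd)
      have hb := hadj _ (w.dart_snd_mem_support_of_mem_darts hd)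
      have hT := isCycle_triangle ha d.adj hb.symm
      rcases walkSign_eq_one_or_neg_one hσsign (cons ha (cons d.adj (cons hb.symm nil))) with h | h
      · simpa [mul_assoc] using h
      · have := hmin _ _ hT h
        simp only [length_cons, length_nil] at this
        omega
    have := walkSign_eq_of_forall_triangle_eq_one hσsymm hσsign w hadj htri
    rcases hσsign _ _ (hadj v (by simp)) with h | h <;> norm_num [h, hneg] at this

end IsShortestNegCycle

theorem card_le_card_edgeFinset_compl_add_three [Fintype V] [DecidableEq V] [DecidableRel G.Adj]
    (hσsymm : ∀ u v, σ u v = σ v u) (hσsign : ∀ u v, G.Adj u v → σ u v = 1 ∨ σ u v = -1)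
    (hfree : K4MinusFree G σ) (hunbal : IsUnbalanced G σ) :
    Fintype.card V ≤ #Gᶜ.edgeFinset + 3 := by
  obtain ⟨v, w, hw⟩ := hunbal.exists_isShortestNegCycle
  have hcount := choose_two_add_card_compl_le_card_edgeFinset_compl_add w.support.toFinset
    w.edges.toFinset
    (fun x hx y hy hxy => List.mem_toFinset.2 <| hw.mem_edges_of_adj hσsymm hσsign
      (List.mem_toFinset.1 hx) (List.mem_toFinset.1 hy) hxy)
    (fun x _ => by simpa using hw.exists_not_adj hσsymm hσsign hfree x)
  have hedges : #w.edges.toFinset ≤ w.length := (List.toFinset_card_le _).trans_eq w.length_edges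
  have hk := Nat.two_mul_le_choose_two_add_three hw.1.three_le_length
  have hkV := card_le_univ w.support.toFinset
  rw [card_compl, hw.1.card_support_toFinset] at hcount
  rw [hw.1.card_support_toFinset] at hkV
  omega

end SignedGraph

theorem K4MinusFree_unbalanced_edge_bound_general (n : ℕ)
    (G : SimpleGraph (Fin n)) [DecidableRel G.Adj] (σ : Fin n → Fin n → ℝ)
    (hσsymm : ∀ u v, σ u v = σ v u)
    (hσsign : ∀ u v, G.Adj u v → σ u v = 1 ∨ σ u v = -1)
    (hfree : K4MinusFree G σ) (hunbal : IsUnbalanced G σ) :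
    (G.edgeFinset.card : ℝ) ≤ n * (n - 1) / 2 - (n - 3) := by
  have hcompl := card_le_card_edgeFinset_compl_add_three hσsymm hσsign hfree hunbal
  have htotal := card_edgeFinset_add_card_edgeFinset_compl (G := G)
  rw [Fintype.card_fin] at hcompl htotal
  have htotal' : (#G.edgeFinset : ℝ) + #Gᶜ.edgeFinset = n * (n - 1) / 2 := by
    rw [← Nat.cast_choose_two, ← htotal, Nat.cast_add]
  have hcompl' : (n : ℝ) ≤ #Gᶜ.edgeFinset + 3 := by exact_mod_cast hcompl
  linarith

/-- A `𝒦₄⁻`-free unbalanced signed graph of order `n ≥ 7` has at most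
`n(n-1)/2 - (n-3)` edges. -/
theorem K4MinusFree_unbalanced_edge_bound (n : ℕ) (hn : 7 ≤ n)
    (G : SimpleGraph (Fin n)) [DecidableRel G.Adj] (σ : Fin n → Fin n → ℝ)
    (hσsymm : ∀ u v, σ u v = σ v u)
    (hσsign : ∀ u v, G.Adj u v → σ u v = 1 ∨ σ u v = -1)
    (hfree : K4MinusFree G σ) (hunbal : IsUnbalanced G σ) :
    (G.edgeFinset.card : ℝ) ≤ n * (n - 1) / 2 - (n - 3) :=
  K4MinusFree_unbalanced_edge_bound_general n G σ hσsymm hσsign hfree hunbal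
end
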